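/- Let L_w = L + L̂ ε be the dual Laplacian of a connected dual number weighted graph on n vertices and J the all-ones matrix. Then L_w + (1/n) J is invertible over the dual numbers and L_w† = (L_w + (1/n) J)^{-1} - (1/n) J. -/

import Mathlib

/-!
Over the dual numbers `A + Â ε` is invertible as soon as `A` is, with inverse
`A⁻¹ - A⁻¹ Â A⁻¹ ε`. Since `G` is connected, the kernel of `L` is spanned by the all-ones
vector, and the Penrose equations then force `L L† = I - J/n` and `J L† = 0`; hence
`(L + J/n)⁻¹ = L† + J/n`. As `L̂ J = J L̂ = 0`, also `(L† + J/n) L̂ (L† + J/n) = L† L̂ L†`.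
-/

open Matrix

/-- The dual matrix `A_s + A_d ε` built from its standard and infinitesimal parts. -/
def dm {m n : Type*} (A B : Matrix m n ℝ) : Matrix m n (DualNumber ℝ) :=
  Matrix.of fun i j => TrivSqZeroExt.inl (A i j) + TrivSqZeroExt.inr (B i j)

section DualMatrix

variable {l m k : Type*}

lemma dm_add (A B C D : Matrix m k ℝ) : dm A B + dm C D = dm (A + C) (B + D) := by
  ext i j <;> simp [dm]

lemma dm_mul [Fintype m] (A B : Matrix l m ℝ) (C D : Matrix m k ℝ) :
    dm A B * dm C D = dm (A * C) (A * D + B * C) := by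
  ext i j
  · simp [dm, mul_apply, TrivSqZeroExt.fst_sum]
  · simp [dm, mul_apply, TrivSqZeroExt.snd_sum, Finset.sum_add_distrib, mul_comm, add_comm]

lemma dm_one [Fintype m] [DecidableEq m] : dm (1 : Matrix m m ℝ) 0 = 1 := by
  ext i j <;> simp [dm, one_apply, apply_ite]

lemma smul_of_one_eq_dm (c : ℝ) :
    c • of (fun (_ : m) (_ : k) => (1 : DualNumber ℝ)) = dm (c • of fun _ _ => 1) 0 := by
  ext i j <;> simp [dm]

variable [Fintype m] [DecidableEq m] {A B : Matrix m m ℝ}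

lemma dm_mul_dm_neg_eq_one (h : A * B = 1) (Â : Matrix m m ℝ) :
    dm A Â * dm B (-(B * Â * B)) = 1 := by
  rw [dm_mul, mul_neg, ← Matrix.mul_assoc, ← Matrix.mul_assoc, h, Matrix.one_mul,
    neg_add_cancel, dm_one]

lemma isUnit_dm (h : A * B = 1) (Â : Matrix m m ℝ) : IsUnit (dm A Â) :=
  (isUnit_iff_isUnit_det _).mpr (isUnit_det_of_right_inverse (dm_mul_dm_neg_eq_one h Â))

lemma inv_dm (h : A * B = 1) (Â : Matrix m m ℝ) : (dm A Â)⁻¹ = dm B (-(B * Â * B)) :=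
  inv_eq_right_inv (dm_mul_dm_neg_eq_one h Â)

end DualMatrix

section AllOnes

variable {R : Type*} [NonAssocSemiring R] {l m k : Type*} [Fintype m]

lemma mul_of_one_eq_zero {A : Matrix l m R} (h : A *ᵥ (fun _ => 1) = 0) :
    A * of (fun (_ : m) (_ : k) => (1 : R)) = 0 := by
  ext i j
  simpa [mul_apply, mulVec, dotProduct] using congrFun h i

lemma of_one_mul_eq_zero {A : Matrix m k R} (h : (fun _ => 1) ᵥ* A = 0) :
    of (fun (_ : l) (_ : m) => (1 : R)) * A = 0 := by
  ext i j
  simpa [mul_apply, vecMul, dotProduct] using congrFun h j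

lemma of_one_mul_of_one :
    of (fun (_ : l) (_ : m) => (1 : R)) * of (fun (_ : m) (_ : k) => (1 : R))
      = (Fintype.card m : R) • of fun _ _ => 1 := by
  ext i j
  simp [mul_apply]

end AllOnes

namespace SimpleGraph

variable {V : Type*} [Fintype V] {G : SimpleGraph V}

lemma Connected.natCast_card_ne_zero (hG : G.Connected) : (Fintype.card V : ℝ) ≠ 0 :=
  Nat.cast_ne_zero.mpr (Fintype.card_pos_iff.mpr hG.nonempty).ne'

variable [DecidableEq V] [DecidableRel G.Adj]

lemma lapMatrix_mul_of_one : G.lapMatrix ℝ * of (fun _ _ => 1) = 0 :=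
  mul_of_one_eq_zero G.lapMatrix_mulVec_const_eq_zero

lemma of_one_mul_lapMatrix : of (fun _ _ => 1) * G.lapMatrix ℝ = 0 := by
  rw [← (G.isSymm_lapMatrix ℝ).eq, ← transpose_eq_zero, transpose_mul, transpose_transpose]
  exact lapMatrix_mul_of_one

/-- The kernel of the Laplacian of a connected graph consists of the constant vectors,
so every column of `M` is constant. -/
lemma of_one_mul_eq_card_smul_of_lapMatrix_mul_eq_zero (hG : G.Connected)
    {M : Matrix V V ℝ} (hM : G.lapMatrix ℝ * M = 0) :
    of (fun _ _ => 1) * M = (Fintype.card V : ℝ) • M := by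
  have hconst : ∀ i i' j, M i j = M i' j := fun i i' j =>
    (G.lapMatrix_mulVec_eq_zero_iff_forall_reachable).mp
      (by ext k; simpa [mulVec, dotProduct, mul_apply] using congrFun (congrFun hM k) j)
      i i' (hG.preconnected i i')
  ext i j
  simp [mul_apply, Finset.sum_congr rfl fun k _ => hconst k i j]

variable {Ld : Matrix V V ℝ}

lemma lapMatrix_mul_pinv (hG : G.Connected)
    (h1 : G.lapMatrix ℝ * Ld * G.lapMatrix ℝ = G.lapMatrix ℝ)
    (h3 : (G.lapMatrix ℝ * Ld)ᵀ = G.lapMatrix ℝ * Ld) :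
    G.lapMatrix ℝ * Ld = 1 - (Fintype.card V : ℝ)⁻¹ • of fun _ _ => 1 := by
  set L := G.lapMatrix ℝ
  set M := 1 - L * Ld with hM
  have hML : M * L = 0 := by rw [hM, Matrix.sub_mul, Matrix.one_mul, h1, sub_self]
  have hL : Lᵀ = L := G.isSymm_lapMatrix ℝ
  have hMsymm : Mᵀ = M := by rw [hM, transpose_sub, transpose_one, h3]
  have hLM : L * M = 0 :=
    calc L * M = (M * L)ᵀ := by rw [transpose_mul, hL, hMsymm]
      _ = 0 := by rw [hML, transpose_zero]
  have hJM : of (fun _ _ => 1) * M = of fun _ _ => 1 := by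
    rw [hM, Matrix.mul_sub, Matrix.mul_one, ← Matrix.mul_assoc, of_one_mul_lapMatrix,
      Matrix.zero_mul, sub_zero]
  rw [of_one_mul_eq_card_smul_of_lapMatrix_mul_eq_zero hG hLM] at hJM
  rw [← hJM, smul_smul, inv_mul_cancel₀ hG.natCast_card_ne_zero, one_smul, hM, sub_sub_cancel]

lemma of_one_mul_pinv (h2 : Ld * G.lapMatrix ℝ * Ld = Ld)
    (h4 : (Ld * G.lapMatrix ℝ)ᵀ = Ld * G.lapMatrix ℝ) :
    of (fun _ _ => 1) * Ld = 0 :=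
  calc of (fun _ _ => 1) * Ld = of (fun _ _ => 1) * ((Ld * G.lapMatrix ℝ)ᵀ * Ld) := by
        rw [h4, h2]
    _ = of (fun _ _ => 1) * G.lapMatrix ℝ * (Ldᵀ * Ld) := by
      rw [transpose_mul, (G.isSymm_lapMatrix ℝ).eq, Matrix.mul_assoc, Matrix.mul_assoc]
    _ = 0 := by rw [of_one_mul_lapMatrix, Matrix.zero_mul]

lemma lapMatrix_add_smul_mul_pinv_add_smul (hG : G.Connected)
    (h1 : G.lapMatrix ℝ * Ld * G.lapMatrix ℝ = G.lapMatrix ℝ) (h2 : Ld * G.lapMatrix ℝ * Ld = Ld)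
    (h3 : (G.lapMatrix ℝ * Ld)ᵀ = G.lapMatrix ℝ * Ld)
    (h4 : (Ld * G.lapMatrix ℝ)ᵀ = Ld * G.lapMatrix ℝ) :
    (G.lapMatrix ℝ + (Fintype.card V : ℝ)⁻¹ • of fun _ _ => 1)
      * (Ld + (Fintype.card V : ℝ)⁻¹ • of fun _ _ => 1) = 1 := by
  rw [Matrix.add_mul, Matrix.mul_add, Matrix.mul_add, lapMatrix_mul_pinv hG h1 h3,
    Matrix.mul_smul, lapMatrix_mul_of_one, Matrix.smul_mul, of_one_mul_pinv h2 h4, Matrix.smul_mul,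
    Matrix.mul_smul, of_one_mul_of_one, smul_smul, smul_smul, mul_assoc,
    inv_mul_cancel₀ hG.natCast_card_ne_zero]
  simp

end SimpleGraph

lemma add_mul_mul_add_of_mul_eq_zero {R : Type*} [NonUnitalRing R] {a n : R} (han : a * n = 0)
    (hna : n * a = 0) (x : R) : (x + n) * a * (x + n) = x * a * x := by
  simp [add_mul, mul_add, mul_assoc, han, hna]

theorem dual_laplacian_mp_via_inverse_general {n : ℕ}
    (G : SimpleGraph (Fin n)) [DecidableRel G.Adj] (hG : G.Connected)
    (Lhat : Matrix (Fin n) (Fin n) ℝ)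
    (hrow : Lhat *ᵥ (fun _ => (1 : ℝ)) = 0)
    (hcol : (fun _ => (1 : ℝ)) ᵥ* Lhat = 0)
    (Ld : Matrix (Fin n) (Fin n) ℝ)
    (h1 : G.lapMatrix ℝ * Ld * G.lapMatrix ℝ = G.lapMatrix ℝ)
    (h2 : Ld * G.lapMatrix ℝ * Ld = Ld)
    (h3 : (G.lapMatrix ℝ * Ld)ᵀ = G.lapMatrix ℝ * Ld)
    (h4 : (Ld * G.lapMatrix ℝ)ᵀ = Ld * G.lapMatrix ℝ) :
    IsUnit (dm (G.lapMatrix ℝ) Lhat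
        + (n : ℝ)⁻¹ • Matrix.of (fun _ _ => (1 : DualNumber ℝ))) ∧
      dm Ld (-(Ld * Lhat * Ld))
        = (dm (G.lapMatrix ℝ) Lhat
            + (n : ℝ)⁻¹ • Matrix.of (fun _ _ => (1 : DualNumber ℝ)))⁻¹
          - (n : ℝ)⁻¹ • Matrix.of (fun _ _ => (1 : DualNumber ℝ)) := by
  have hinv := G.lapMatrix_add_smul_mul_pinv_add_smul hG h1 h2 h3 h4
  rw [Fintype.card_fin] at hinv
  have hsandwich :
      (Ld + (n : ℝ)⁻¹ • of fun _ _ => 1) * Lhat * (Ld + (n : ℝ)⁻¹ • of fun _ _ => 1)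
        = Ld * Lhat * Ld :=
    add_mul_mul_add_of_mul_eq_zero
      (by rw [Matrix.mul_smul, mul_of_one_eq_zero hrow, smul_zero])
      (by rw [Matrix.smul_mul, of_one_mul_eq_zero hcol, smul_zero]) _
  rw [smul_of_one_eq_dm, dm_add, add_zero]
  refine ⟨isUnit_dm hinv Lhat, ?_⟩
  rw [inv_dm hinv, hsandwich, eq_sub_iff_add_eq, dm_add, add_zero]

/-- For the dual Laplacian `L_w` of a connected dual number weighted graph on `n` vertices,
`L_w + (1/n) J` is invertible over the dual numbers and
`L_w† = (L_w + (1/n) J)⁻¹ - (1/n) J`, where `L_w† = L† - L† L̂ L† ε`. -/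
theorem dual_laplacian_mp_via_inverse {n : ℕ} (hn : 0 < n)
    (G : SimpleGraph (Fin n)) [DecidableRel G.Adj] (hG : G.Connected)
    (Lhat : Matrix (Fin n) (Fin n) ℝ) (hsym : Lhatᵀ = Lhat)
    (hrow : Lhat *ᵥ (fun _ => (1 : ℝ)) = 0)
    (hcol : (fun _ => (1 : ℝ)) ᵥ* Lhat = 0)
    (Ld : Matrix (Fin n) (Fin n) ℝ)
    (h1 : G.lapMatrix ℝ * Ld * G.lapMatrix ℝ = G.lapMatrix ℝ)
    (h2 : Ld * G.lapMatrix ℝ * Ld = Ld)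
    (h3 : (G.lapMatrix ℝ * Ld)ᵀ = G.lapMatrix ℝ * Ld)
    (h4 : (Ld * G.lapMatrix ℝ)ᵀ = Ld * G.lapMatrix ℝ) :
    IsUnit (dm (G.lapMatrix ℝ) Lhat
        + (n : ℝ)⁻¹ • Matrix.of (fun _ _ => (1 : DualNumber ℝ))) ∧
      dm Ld (-(Ld * Lhat * Ld))
        = (dm (G.lapMatrix ℝ) Lhat
            + (n : ℝ)⁻¹ • Matrix.of (fun _ _ => (1 : DualNumber ℝ)))⁻¹
          - (n : ℝ)⁻¹ • Matrix.of (fun _ _ => (1 : DualNumber ℝ)) :=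
  dual_laplacian_mp_via_inverse_general G hG Lhat hrow hcol Ld h1 h2 h3 h4
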